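/- Let F = {1,…,K} and C the set of subsets of F. Let λ : C → [0,∞), U_s ≥ 0, μ > 0, and γ > μ (allowing γ = ∞ with μ/γ = 0). For S ⊊ F define Δ_S := Σ_{C ⊆ S} λ_C − (U_s + Σ_{C ⊄ S} λ_C(K − |C| + μ/γ))/(1 − μ/γ). Then Δ_S < 0 for every proper subset S of F if and only if Δ_{F−{k}} < 0 for every k ∈ F. -/

import Mathlib

open Finset

/-!
Enlarging `S` moves weight from the subsets not contained in `S` to those contained in it; since
all weights `λ_C` and `λ_C (K - |C| + ρ)` are nonnegative and `1 - ρ > 0`, `Δ` is monotone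
for inclusion. Every proper subset lies in some `F - {k}`, so it suffices to check those.
-/

section SubsetSums

variable {α M : Type*} [Fintype α] [DecidableEq α]
  [AddCommMonoid M] [PartialOrder M] [IsOrderedAddMonoid M]
  {f : Finset α → M}

theorem monotone_sum_filter_subset (hf : ∀ C, 0 ≤ f C) :
    Monotone fun S : Finset α => ∑ C ∈ univ.filter (· ⊆ S), f C :=
  fun _ _ hST => sum_le_sum_of_subset_of_nonneg
    (monotone_filter_right _ fun _ _ hC => hC.trans hST) fun C _ _ => hf C

theorem antitone_sum_filter_not_subset (hf : ∀ C, 0 ≤ f C) :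
    Antitone fun S : Finset α => ∑ C ∈ univ.filter (¬ · ⊆ S), f C :=
  fun _ _ hST => sum_le_sum_of_subset_of_nonneg
    (monotone_filter_right _ fun _ _ hC h => hC (h.trans hST)) fun C _ _ => hf C

end SubsetSums

theorem Monotone.forall_ne_univ_lt_iff_forall_erase_lt {α β : Type*} [Fintype α] [DecidableEq α]
    [Preorder β] {f : Finset α → β} (hf : Monotone f) (b : β) :
    (∀ S, S ≠ univ → f S < b) ↔ ∀ a, f (univ.erase a) < b := by
  refine ⟨fun h a => h _ fun he => ?_, fun h S hS => ?_⟩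
  · simpa using congrArg (a ∈ ·) he
  · obtain ⟨a, ha⟩ : ∃ a, a ∉ S := by simpa [eq_univ_iff_forall] using hS
    exact (hf (subset_erase.2 ⟨subset_univ S, ha⟩)).trans_lt (h a)

-- `ρ` stands for `μ/γ`, with `ρ = 0` for `γ = ∞`.
theorem delta_neg_iff_maximal_subsets_general
    (K : ℕ) (lam : Finset (Fin K) → ℝ) (hlam : ∀ C, 0 ≤ lam C)
    (Us : ℝ) (ρ : ℝ) (hρ0 : 0 ≤ ρ) (hρ1 : ρ < 1)
    (Δ : Finset (Fin K) → ℝ)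
    (hΔ : ∀ S, Δ S =
      (∑ C ∈ Finset.univ.filter (fun C => C ⊆ S), lam C)
        - (Us + ∑ C ∈ Finset.univ.filter (fun C => ¬ C ⊆ S),
            lam C * ((K : ℝ) - C.card + ρ)) / (1 - ρ)) :
    (∀ S : Finset (Fin K), S ≠ Finset.univ → Δ S < 0) ↔
      (∀ k : Fin K, Δ (Finset.univ.erase k) < 0) := by
  have hweight : ∀ C : Finset (Fin K), 0 ≤ lam C * ((K : ℝ) - C.card + ρ) := fun C => by
    have hcard : (C.card : ℝ) ≤ K := by
      exact_mod_cast card_le_univ C |>.trans_eq (Fintype.card_fin K)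
    exact mul_nonneg (hlam C) (by linarith)
  have hmono : Monotone Δ := fun S T hST => by
    rw [hΔ, hΔ]
    gcongr ?_ - (Us + ?_) / _
    · exact monotone_sum_filter_subset hlam hST
    · exact antitone_sum_filter_not_subset hweight hST
  exact hmono.forall_ne_univ_lt_iff_forall_erase_lt 0

/-- `Δ_S < 0` for every proper subset `S` of `F` iff
`Δ_{F-{k}} < 0` for every `k ∈ F`.  Here `ρ` stands for `μ/γ` (with `ρ = 0`
allowed, corresponding to `γ = ∞`), and `0 ≤ ρ < 1` since `0 < μ < γ`. -/
theorem delta_neg_iff_maximal_subsets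
    (K : ℕ) (hK : 1 ≤ K) (lam : Finset (Fin K) → ℝ) (hlam : ∀ C, 0 ≤ lam C)
    (Us : ℝ) (hUs : 0 ≤ Us) (ρ : ℝ) (hρ0 : 0 ≤ ρ) (hρ1 : ρ < 1)
    (Δ : Finset (Fin K) → ℝ)
    (hΔ : ∀ S, Δ S =
      (∑ C ∈ Finset.univ.filter (fun C => C ⊆ S), lam C)
        - (Us + ∑ C ∈ Finset.univ.filter (fun C => ¬ C ⊆ S),
            lam C * ((K : ℝ) - C.card + ρ)) / (1 - ρ)) :
    (∀ S : Finset (Fin K), S ≠ Finset.univ → Δ S < 0) ↔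
      (∀ k : Fin K, Δ (Finset.univ.erase k) < 0) :=
  delta_neg_iff_maximal_subsets_general K lam hlam Us ρ hρ0 hρ1 Δ hΔ
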